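/- arXiv:2003.10710 — 2 statements merged into one kernel-verified Lean document; each statement's English description precedes it below -/
import Mathlib

section
/- Let $\nu > 0$, $\Delta > 0$, $\eta \geq 0$, and for $x\in\mathbb{R}^{\eta+1}$ define $G(x) = \sum_{j=1}^{\eta+1}\frac{j}{\nu^{j-1}}|x_j|$. Let $A_\nu$ be the $(\eta+1)\times(\eta+1)$ matrix with diagonal $-\nu$, superdiagonal $1$, zeros elsewhere. Then $G(e^{A_\nu\Delta}x) \leq \left(e^{-\nu\Delta}\sum_{j=0}^{\eta}\frac{(\nu\Delta)^j}{j!}\right) G(x)$ for all $x \in \mathbb{R}^{\eta+1}$. -/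
/-!
Split `A = -ν • 1 + N` with `N` the nilpotent shift, so that
`exp (Δ • A) = exp (-ν Δ) • ∑_{k ≤ η} (Δ ^ k / k!) • N ^ k`. The function `G` is the weighted
ℓ¹ norm with weights `w j = (j + 1) / ν ^ j`; since `w j ≤ ν * w (j + 1)`, the shift satisfies
`G (N x) ≤ ν * G x`, hence `G (N ^ k x) ≤ ν ^ k * G x`, and the triangle inequality for `G`
yields the factor `exp (-ν Δ) * ∑_{k ≤ η} (ν Δ) ^ k / k!`.
-/

open Real Matrix Finset

section WeightedL1

variable {ι : Type*} [Fintype ι]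

def weightedL1 (w x : ι → ℝ) : ℝ := ∑ i, w i * |x i|

variable {w : ι → ℝ}

theorem weightedL1_sum_smul_le (hw : 0 ≤ w) {κ : Type*} (s : Finset κ) (c : κ → ℝ)
    (v : κ → ι → ℝ) :
    weightedL1 w (∑ k ∈ s, c k • v k) ≤ ∑ k ∈ s, |c k| * weightedL1 w (v k) := by
  calc weightedL1 w (∑ k ∈ s, c k • v k)
      ≤ ∑ i, w i * ∑ k ∈ s, |c k| * |v k i| := by
        refine sum_le_sum fun i _ => mul_le_mul_of_nonneg_left ?_ (hw i)
        simpa only [Finset.sum_apply, Pi.smul_apply, smul_eq_mul, abs_mul]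
          using abs_sum_le_sum_abs (fun k => c k * v k i) s
    _ = ∑ k ∈ s, |c k| * weightedL1 w (v k) := by
        simp only [weightedL1, mul_sum]
        rw [sum_comm]
        exact sum_congr rfl fun _ _ => sum_congr rfl fun _ _ => by ring

theorem weightedL1_mulVec_le {M : Matrix ι ι ℝ} {C : ℝ} (hw : 0 ≤ w)
    (hM : ∀ j, ∑ i, w i * |M i j| ≤ C * w j) (x : ι → ℝ) :
    weightedL1 w (M *ᵥ x) ≤ C * weightedL1 w x := by
  have hcols : M *ᵥ x = ∑ j, x j • fun i => M i j := by
    ext i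
    simp [mulVec, dotProduct, mul_comm]
  calc weightedL1 w (M *ᵥ x)
      ≤ ∑ j, |x j| * weightedL1 w (fun i => M i j) := hcols ▸ weightedL1_sum_smul_le hw _ _ _
    _ ≤ ∑ j, |x j| * (C * w j) := by gcongr with j; exact hM j
    _ = C * weightedL1 w x := by simp only [weightedL1, mul_sum]; congr! 1 with j; ring

theorem weightedL1_pow_mulVec_le [DecidableEq ι] {M : Matrix ι ι ℝ} {C : ℝ} (hC : 0 ≤ C)
    (hM : ∀ x, weightedL1 w (M *ᵥ x) ≤ C * weightedL1 w x) (k : ℕ) (x : ι → ℝ) :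
    weightedL1 w ((M ^ k) *ᵥ x) ≤ C ^ k * weightedL1 w x := by
  induction k generalizing x with
  | zero => simp
  | succ k ih =>
    calc weightedL1 w ((M ^ (k + 1)) *ᵥ x)
        = weightedL1 w ((M ^ k) *ᵥ (M *ᵥ x)) := by rw [pow_succ, mulVec_mulVec]
      _ ≤ C ^ k * (C * weightedL1 w x) := (ih _).trans (by gcongr; exact hM x)
      _ = C ^ (k + 1) * weightedL1 w x := by ring

theorem weightedL1_sum_smul_pow_mulVec_le [DecidableEq ι] {M : Matrix ι ι ℝ} {C : ℝ}
    (hw : 0 ≤ w) (hC : 0 ≤ C) (hM : ∀ x, weightedL1 w (M *ᵥ x) ≤ C * weightedL1 w x)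
    (s : Finset ℕ) (c : ℕ → ℝ) (x : ι → ℝ) :
    weightedL1 w ((∑ k ∈ s, c k • M ^ k) *ᵥ x) ≤ (∑ k ∈ s, |c k| * C ^ k) * weightedL1 w x := by
  rw [sum_mulVec, sum_mul]
  simp only [smul_mulVec]
  refine (weightedL1_sum_smul_le hw s c _).trans (sum_le_sum fun k _ => ?_)
  rw [mul_assoc]
  exact mul_le_mul_of_nonneg_left (weightedL1_pow_mulVec_le hC hM k x) (abs_nonneg _)

end WeightedL1

section Shift

variable {R : Type*} [Semiring R] {n : ℕ}

def shiftMatrix (n : ℕ) : Matrix (Fin n) (Fin n) R :=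
  Matrix.of fun i j => if (j : ℕ) = i + 1 then 1 else 0

theorem shiftMatrix_apply (i j : Fin n) :
    (shiftMatrix n : Matrix (Fin n) (Fin n) R) i j = if (j : ℕ) = i + 1 then 1 else 0 :=
  rfl

theorem shiftMatrix_pow_apply (k : ℕ) (i j : Fin n) :
    (shiftMatrix n ^ k : Matrix (Fin n) (Fin n) R) i j = if (j : ℕ) = i + k then 1 else 0 := by
  induction k generalizing j with
  | zero => simp [one_apply, Fin.ext_iff, eq_comm]
  | succ k ih =>
    rw [pow_succ, Matrix.mul_apply]
    simp only [ih, shiftMatrix_apply, ite_mul, one_mul, zero_mul]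
    rw [Fin.sum_univ_eq_sum_range
      (fun l => if l = (i : ℕ) + k then (if (j : ℕ) = l + 1 then (1 : R) else 0) else 0),
      sum_ite_eq']
    simp only [mem_range]
    have := j.isLt
    split_ifs <;> first | rfl | (exfalso; omega)

theorem shiftMatrix_pow_self : (shiftMatrix n ^ n : Matrix (Fin n) (Fin n) R) = 0 := by
  ext i j
  rw [shiftMatrix_pow_apply, if_neg (by omega), Matrix.zero_apply]

end Shift

theorem weightedL1_shiftMatrix_mulVec_le {n : ℕ} {w : ℕ → ℝ} {C : ℝ} (hw : 0 ≤ w) (hC : 0 ≤ C)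
    (hstep : ∀ i, w i ≤ C * w (i + 1)) (x : Fin n → ℝ) :
    weightedL1 (fun i : Fin n => w i) (shiftMatrix n *ᵥ x)
      ≤ C * weightedL1 (fun i : Fin n => w i) x := by
  refine weightedL1_mulVec_le (w := fun i : Fin n => w i) (fun i => hw i) (fun j => ?_) x
  simp only [shiftMatrix_apply, apply_ite abs, abs_one, abs_zero, mul_ite, mul_one, mul_zero]
  rw [Fin.sum_univ_eq_sum_range (fun i => if (j : ℕ) = i + 1 then w i else 0)]
  obtain ⟨_ | m, hj⟩ := j
  · simpa using mul_nonneg hC (hw 0)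
  · simp only [add_left_inj, sum_ite_eq, mem_range]
    split_ifs
    · exact hstep m
    · exact mul_nonneg hC (hw _)

theorem NormedSpace.exp_eq_sum_of_pow_eq_zero (𝕂 : Type*) {𝔸 : Type*} [Field 𝕂] [CharZero 𝕂]
    [Ring 𝔸] [Algebra 𝕂 𝔸] [TopologicalSpace 𝔸] [IsTopologicalRing 𝔸] {a : 𝔸} {n : ℕ}
    (h : a ^ n = 0) : exp a = ∑ k ∈ range n, (k.factorial⁻¹ : 𝕂) • a ^ k := by
  rw [exp_eq_tsum 𝕂]
  exact tsum_eq_sum fun k hk => by rw [pow_eq_zero_of_le (by simpa using hk) h, smul_zero]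

theorem Matrix.exp_algebraMap {ι : Type*} [Fintype ι] [DecidableEq ι] (r : ℝ) :
    NormedSpace.exp (algebraMap ℝ (Matrix ι ι ℝ) r) = algebraMap ℝ _ (Real.exp r) := by
  let _ : NormedRing (Matrix ι ι ℝ) := Matrix.linftyOpNormedRing
  let _ : NormedAlgebra ℝ (Matrix ι ι ℝ) := Matrix.linftyOpNormedAlgebra
  rw [Real.exp_eq_exp_ℝ, NormedSpace.algebraMap_exp_comm]
  rfl

theorem exp_smul_algebraMap_add_shiftMatrix (t a : ℝ) (n : ℕ) :
    NormedSpace.exp (t • (algebraMap ℝ (Matrix (Fin n) (Fin n) ℝ) a + shiftMatrix n)) =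
      Real.exp (t * a) • ∑ k ∈ range n, (t ^ k / k.factorial) • (shiftMatrix n ^ k) := by
  have hnil : (t • shiftMatrix n : Matrix (Fin n) (Fin n) ℝ) ^ n = 0 := by
    rw [smul_pow, shiftMatrix_pow_self, smul_zero]
  rw [smul_add, Algebra.smul_def, ← map_mul,
    Matrix.exp_add_of_commute _ _ (Algebra.commute_algebraMap_left _ _), Matrix.exp_algebraMap,
    ← Algebra.smul_def, NormedSpace.exp_eq_sum_of_pow_eq_zero ℝ hnil]
  congr 1
  refine sum_congr rfl fun k _ => ?_
  rw [smul_pow, smul_smul, inv_mul_eq_div]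

theorem lyapunov_contraction (ν Δ : ℝ) (hν : 0 < ν) (hΔ : 0 < Δ) (η : ℕ)
    (A : Matrix (Fin (η + 1)) (Fin (η + 1)) ℝ)
    (hA : ∀ i j : Fin (η + 1), A i j =
      if (j : ℕ) = (i : ℕ) then -ν else if (j : ℕ) = (i : ℕ) + 1 then 1 else 0)
    (G : (Fin (η + 1) → ℝ) → ℝ)
    (hG : ∀ x : Fin (η + 1) → ℝ,
      G x = ∑ j : Fin (η + 1), ((j : ℕ) + 1 : ℝ) / ν ^ (j : ℕ) * |x j|)
    (x : Fin (η + 1) → ℝ) :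
    G ((NormedSpace.exp (Δ • A)).mulVec x) ≤
      (Real.exp (-ν * Δ) * ∑ j ∈ Finset.range (η + 1), (ν * Δ) ^ j / j.factorial) * G x := by
  set w : ℕ → ℝ := fun j => (j + 1) / ν ^ j
  have hw : 0 ≤ w := fun j => by positivity
  have hstep (j : ℕ) : w j ≤ ν * w (j + 1) := by
    simp only [w]
    rw [pow_succ, ← mul_div_assoc, mul_comm ν, mul_div_mul_right _ _ hν.ne']
    gcongr
    linarith
  have hA' : A = algebraMap ℝ _ (-ν) + shiftMatrix (η + 1) := by
    ext i j
    simp only [hA, Matrix.add_apply, algebraMap_matrix_apply, Algebra.algebraMap_self_apply,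
      shiftMatrix_apply, Fin.ext_iff]
    split_ifs <;> first | (exfalso; omega) | ring
  have hshift := weightedL1_shiftMatrix_mulVec_le (n := η + 1) hw hν.le hstep
  have hGw : ∀ y, G y = weightedL1 (fun j : Fin (η + 1) => w j) y := hG
  rw [hGw, hGw, hA', exp_smul_algebraMap_add_shiftMatrix, smul_sum]
  simp only [smul_smul]
  refine (weightedL1_sum_smul_pow_mulVec_le (w := fun j : Fin (η + 1) => w j) (fun j => hw j)
    hν.le hshift _ _ x).trans_eq ?_
  rw [mul_sum]
  congr 1
  refine sum_congr rfl fun k _ => ?_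
  rw [abs_of_nonneg (by positivity), mul_pow]
  ring_nf
end

section
/- Let $\nu > 0$, $\Delta > 0$, $\eta \geq 0$, and consider the discrete linear control system $x(t+1) = M x(t) + b\, u(t+1)$ in $\mathbb{R}^{\eta+1}$, where $M = e^{A_\nu\Delta}$ (upper triangular with entries $e^{-\nu\Delta}\Delta^{j-i}/(j-i)!$ for $j\geq i$) and $b_i = \Delta^{\eta+1-i}/(\eta+1-i)!$. Then for any $x, y \in \mathbb{R}^{\eta+1}$ there exists a sequence of controls $u(1),\dots,u(\eta+1) \in \mathbb{R}$ such that starting from $x(0) = x$, one has $x(\eta+1) = y$. -/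
/-!
With `N` the nilpotent upper shift, `M = e^{-νΔ} exp (ΔN)` and `b = exp (ΔN) e_η`, so the Krylov
vectors are `M^k b = e^{-kνΔ} exp ((k+1)ΔN) e_η`. Up to nonzero factors on rows and columns these
form a Vandermonde matrix at the distinct nodes `Δ, 2Δ, …, (η+1)Δ`, hence span the state space
(Kalman's rank condition). By variation of constants
`x(η+1) = M^(η+1) x + ∑_{k ≤ η} u(η+1-k) M^k b`, so the controls can be read off as the
coordinates of `y - M^(η+1) x` in this basis.
-/

open Real Matrix Finset

section Controllability

variable {R V : Type*} [CommRing R] [AddCommGroup V] [Module R V]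

def controlledTrajectory (f : Module.End R V) (b : V) (u : ℕ → R) (x : V) : ℕ → V
  | 0 => x
  | t + 1 => f (controlledTrajectory f b u x t) + u (t + 1) • b

theorem controlledTrajectory_eq_pow_add_sum (f : Module.End R V) (b : V) (u : ℕ → R) (x : V)
    (t : ℕ) :
    controlledTrajectory f b u x t = (f ^ t) x + ∑ k ∈ range t, u (t - k) • (f ^ k) b := by
  induction t with
  | zero => simp [controlledTrajectory]
  | succ t ih =>
    rw [controlledTrajectory, ih, map_add, map_sum, sum_range_succ']
    simp only [map_smul, ← Module.End.mul_apply, ← pow_succ', pow_zero, Module.End.one_apply,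
      Nat.sub_zero, Nat.succ_sub_succ]
    abel

theorem exists_controlledTrajectory_eq {f : Module.End R V} {b : V} {n : ℕ}
    (hspan : Submodule.span R (Set.range fun k : Fin n => (f ^ (k : ℕ)) b) = ⊤) (x y : V) :
    ∃ u : ℕ → R, controlledTrajectory f b u x n = y := by
  obtain ⟨c, hc⟩ := (Submodule.mem_span_range_iff_exists_fun R).mp
    (hspan ▸ Submodule.mem_top : y - (f ^ n) x ∈ _)
  -- the control applied at time `n - k` is the coefficient of `f ^ k b`
  refine ⟨fun t => if h : n - t < n then c ⟨n - t, h⟩ else 0, ?_⟩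
  rw [controlledTrajectory_eq_pow_add_sum, ← Fin.sum_univ_eq_sum_range (fun k => _ • (f ^ k) b)]
  have hcoeff : ∀ k : Fin n,
      (if h : n - (n - (k : ℕ)) < n then c ⟨n - (n - k), h⟩ else 0) = c k :=
    fun k => by rw [dif_pos (by omega)]; congr; omega
  simp only [hcoeff, hc, add_sub_cancel]

end Controllability

section ExpColumn

variable {K : Type*} [Field K]

-- `expShift η s = exp (s N)` for the nilpotent upper shift `N`; `expColumn η s` is its last column.
def expShift (η : ℕ) (s : K) : Matrix (Fin (η + 1)) (Fin (η + 1)) K :=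
  of fun i j => if (i : ℕ) ≤ (j : ℕ) then s ^ ((j : ℕ) - (i : ℕ)) / ((j : ℕ) - (i : ℕ)).factorial
    else 0

def expColumn (η : ℕ) (s : K) : Fin (η + 1) → K :=
  fun i => s ^ (η - (i : ℕ)) / (η - (i : ℕ)).factorial

variable [CharZero K]

theorem add_pow_div_factorial (x y : K) (n : ℕ) :
    ∑ a ∈ range (n + 1), x ^ a / a.factorial * (y ^ (n - a) / (n - a).factorial) =
      (x + y) ^ n / n.factorial := by
  rw [add_pow, sum_div]
  refine sum_congr rfl fun a ha => ?_
  rw [Nat.cast_choose K (mem_range_succ_iff.mp ha)]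
  field_simp
  exact (mul_div_mul_right _ _ (Nat.cast_ne_zero.mpr n.factorial_ne_zero)).symm

variable {η : ℕ}

theorem expShift_mulVec_expColumn (r s : K) :
    expShift η r *ᵥ expColumn η s = expColumn η (r + s) := by
  ext i
  simp only [mulVec, dotProduct, expShift, expColumn, of_apply]
  rw [Fin.sum_univ_eq_sum_range (fun j => (if (i : ℕ) ≤ j then
      r ^ (j - (i : ℕ)) / (j - (i : ℕ)).factorial else 0) * (s ^ (η - j) / (η - j).factorial)),
    show range (η + 1) = range (i + (η - i + 1)) by congr 1; omega, sum_range_add,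
    sum_eq_zero fun j hj => by simp [(mem_range.mp hj).not_ge], zero_add,
    ← add_pow_div_factorial]
  refine sum_congr rfl fun a _ => ?_
  rw [if_pos (Nat.le_add_right _ _), Nat.add_sub_cancel_left, Nat.sub_add_eq]

theorem expShift_pow_mulVec_expColumn (s : K) (k : ℕ) :
    expShift η s ^ k *ᵥ expColumn η s = expColumn η ((k + 1) * s) := by
  induction k with
  | zero => simp
  | succ k ih =>
    rw [pow_succ', ← mulVec_mulVec, ih, expShift_mulVec_expColumn]
    push_cast
    ring_nf

theorem det_expColumn_ne_zero {t : Fin (η + 1) → K} (ht : Function.Injective t) :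
    (of fun i k => expColumn η (t k) i).det ≠ 0 := by
  have hV : (of fun i k => expColumn η (t k) i) = of fun i k : Fin (η + 1) =>
      ((η - (i : ℕ)).factorial : K)⁻¹ * ((vandermonde t)ᵀ.submatrix Fin.revPerm id) i k := by
    ext i k
    simp [expColumn, vandermonde, Fin.val_rev, div_eq_inv_mul]
  rw [hV, det_mul_column, det_permute, det_transpose]
  refine mul_ne_zero (prod_ne_zero_iff.mpr fun i _ => by simp [Nat.factorial_ne_zero])
    (mul_ne_zero (by simp) (det_vandermonde_ne_zero_iff.mpr ht))

theorem linearIndependent_expColumn {t : Fin (η + 1) → K} (ht : Function.Injective t) :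
    LinearIndependent K fun k => expColumn η (t k) :=
  linearIndependent_cols_of_det_ne_zero (det_expColumn_ne_zero ht)

theorem span_range_pow_smul_expShift_expColumn_eq_top {c Δ : K} (hc : c ≠ 0) (hΔ : Δ ≠ 0) :
    Submodule.span K (Set.range fun k : Fin (η + 1) =>
      ((c • expShift η Δ).toLin' ^ (k : ℕ)) (expColumn η Δ)) = ⊤ := by
  have hnodes : Function.Injective fun k : Fin (η + 1) => ((k : ℕ) + 1 : K) * Δ := fun k l h => by
    simpa [hΔ, Fin.val_inj] using h
  have hkrylov : (fun k : Fin (η + 1) => ((c • expShift η Δ).toLin' ^ (k : ℕ)) (expColumn η Δ)) =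
      (fun k : Fin (η + 1) => Units.mk0 c hc ^ (k : ℕ)) •
        fun k : Fin (η + 1) => expColumn η (((k : ℕ) + 1 : K) * Δ) := by
    ext1 k
    rw [← toLin'_pow, toLin'_apply, smul_pow, smul_mulVec, expShift_pow_mulVec_expColumn]
    simp [Units.smul_def]
  exact hkrylov ▸ Module.Basis.units_smul_span_eq_top
    ((linearIndependent_expColumn hnodes).span_eq_top_of_card_eq_finrank' (by simp))

end ExpColumn

theorem discrete_exact_controllability_general (ν Δ : ℝ) (hΔ : 0 < Δ) (η : ℕ)
    (b : Fin (η + 1) → ℝ)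
    (hb : ∀ i : Fin (η + 1), b i = Δ ^ (η - (i : ℕ)) / (η - (i : ℕ)).factorial)
    (M : Matrix (Fin (η + 1)) (Fin (η + 1)) ℝ)
    (hM : ∀ i j : Fin (η + 1), M i j =
      if (i : ℕ) ≤ (j : ℕ)
        then Real.exp (-ν * Δ) * Δ ^ ((j : ℕ) - (i : ℕ)) / ((j : ℕ) - (i : ℕ)).factorial
        else 0)
    (x y : Fin (η + 1) → ℝ) :
    ∃ u : ℕ → ℝ, ∃ traj : ℕ → Fin (η + 1) → ℝ,
      traj 0 = x ∧
      (∀ t : ℕ, traj (t + 1) = M.mulVec (traj t) + u (t + 1) • b) ∧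
      traj (η + 1) = y := by
  obtain rfl : b = expColumn η Δ := funext hb
  have hM : M = exp (-ν * Δ) • expShift η Δ := by
    ext i j
    rw [hM, Matrix.smul_apply, expShift, of_apply]
    split_ifs <;> simp [mul_div_assoc]
  obtain ⟨u, hu⟩ := exists_controlledTrajectory_eq
    (hM ▸ span_range_pow_smul_expShift_expColumn_eq_top (exp_pos (-ν * Δ)).ne' hΔ.ne') x y
  exact ⟨u, controlledTrajectory M.toLin' (expColumn η Δ) u x, rfl, fun t => rfl, hu⟩

theorem discrete_exact_controllability (ν Δ : ℝ) (hν : 0 < ν) (hΔ : 0 < Δ) (η : ℕ)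
    (b : Fin (η + 1) → ℝ)
    (hb : ∀ i : Fin (η + 1), b i = Δ ^ (η - (i : ℕ)) / (η - (i : ℕ)).factorial)
    (M : Matrix (Fin (η + 1)) (Fin (η + 1)) ℝ)
    (hM : ∀ i j : Fin (η + 1), M i j =
      if (i : ℕ) ≤ (j : ℕ)
        then Real.exp (-ν * Δ) * Δ ^ ((j : ℕ) - (i : ℕ)) / ((j : ℕ) - (i : ℕ)).factorial
        else 0)
    (x y : Fin (η + 1) → ℝ) :
    ∃ u : ℕ → ℝ, ∃ traj : ℕ → Fin (η + 1) → ℝ,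
      traj 0 = x ∧
      (∀ t : ℕ, traj (t + 1) = M.mulVec (traj t) + u (t + 1) • b) ∧
      traj (η + 1) = y :=
  discrete_exact_controllability_general ν Δ hΔ η b hb M hM x y
end
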